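/- The squared exponential kernel matrix of M pairwise distinct points in ℝ^d is positive definite, hence has strictly positive determinant. -/

import Mathlib

/-!
Completing the square, `exp (-‖x - y‖² / 2l²) = a(x) · exp (⟪x, y⟫ / l²) · a(y)` with
`a(x) = exp (-‖x‖² / 2l²) > 0`, so the kernel matrix is a positive diagonal congruence of
`E = [exp (t ⟪xᵢ, xⱼ⟫)]`, `t = l⁻²`. Expanding the exponential series,
`cᵀ E c = ∑ₙ tⁿ / n! ∑_{g : Fin n → Fin d} (∑ᵢ cᵢ ∏ₘ xᵢ (g m))²`, a sum of squares. If all the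
inner sums vanish, then `∑ᵢ cᵢ p(xᵢ) = 0` for every polynomial `p`; taking for `p` a product of
coordinate differences vanishing at every `xⱼ` with `j ≠ i₀` but not at `x_{i₀}` forces `c_{i₀} = 0`.
-/

open Finset Matrix

section Monomials

variable {ι κ R : Type*} [Fintype ι] [CommRing R]

theorem sum_mul_sub_mul_prod (x : ι → κ → R) (b w : ι → R) (k : κ) (c : R) {n : ℕ}
    (g : Fin n → κ) :
    ∑ i, b i * ((x i k - c) * w i) * ∏ m, x i (g m) =
      ∑ i, b i * w i * ∏ m, x i ((Fin.cons k g : Fin (n + 1) → κ) m) -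
        c * ∑ i, b i * w i * ∏ m, x i (g m) := by
  simp only [mul_sum, ← sum_sub_distrib]
  exact sum_congr rfl fun i _ => by
    rw [Fin.prod_univ_succ]
    simp only [Fin.cons_zero, Fin.cons_succ]
    ring

theorem eq_zero_of_forall_sum_mul_prod_eq_zero [IsDomain R] {x : ι → κ → R}
    (hx : Function.Injective x) {b : ι → R}
    (h : ∀ (n : ℕ) (g : Fin n → κ), ∑ i, b i * ∏ m, x i (g m) = 0) : b = 0 := by
  classical
  funext i₀
  -- `w` stands for the values `p (x i)` of a polynomial `p` in the coordinates.
  have separate : ∀ s : Finset ι, i₀ ∉ s → ∃ w : ι → R,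
      (∀ (n : ℕ) (g : Fin n → κ), ∑ i, b i * w i * ∏ m, x i (g m) = 0) ∧
        w i₀ ≠ 0 ∧ ∀ j ∈ s, w j = 0 := by
    intro s
    induction s using Finset.induction_on with
    | empty => exact fun _ => ⟨1, by simpa using h, one_ne_zero, by simp⟩
    | insert a s _ ih =>
      intro hi₀
      rw [mem_insert, not_or] at hi₀
      obtain ⟨w, hw, hwi₀, hws⟩ := ih hi₀.2
      obtain ⟨k, hk⟩ := Function.ne_iff.mp (hx.ne hi₀.1)
      refine ⟨fun i => (x i k - x a k) * w i, fun n g => ?_, ?_, ?_⟩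
      · rw [sum_mul_sub_mul_prod, hw, hw, mul_zero, sub_zero]
      · exact mul_ne_zero (sub_ne_zero.mpr hk) hwi₀
      · intro j hj
        rcases mem_insert.mp hj with rfl | hj
        · exact mul_eq_zero_of_left (sub_self _) _
        · exact mul_eq_zero_of_right _ (hws j hj)
  obtain ⟨w, hw, hwi₀, hw0⟩ := separate (univ.erase i₀) (notMem_erase i₀ univ)
  have hsum := hw 0 Fin.elim0
  simp only [univ_eq_empty, prod_empty, mul_one] at hsum
  rw [sum_eq_single i₀ (fun j _ hj => by rw [hw0 j (mem_erase.mpr ⟨hj, mem_univ j⟩), mul_zero])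
    (by simp)] at hsum
  exact (mul_eq_zero.mp hsum).resolve_right hwi₀

theorem dotProduct_pow [Fintype κ] (v w : κ → R) (n : ℕ) :
    (v ⬝ᵥ w) ^ n = ∑ g : Fin n → κ, (∏ m, v (g m)) * ∏ m, w (g m) := by
  classical
  simp only [dotProduct, sum_pow', Fintype.piFinset_univ, prod_mul_distrib]

theorem sum_sum_mul_mul_dotProduct_pow [Fintype κ] (x : ι → κ → R) (c : ι → R) (n : ℕ) :
    ∑ i, ∑ j, c i * c j * (x i ⬝ᵥ x j) ^ n =
      ∑ g : Fin n → κ, (∑ i, c i * ∏ m, x i (g m)) ^ 2 := by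
  calc ∑ i, ∑ j, c i * c j * (x i ⬝ᵥ x j) ^ n
      = ∑ i, ∑ j, ∑ g : Fin n → κ, (c i * ∏ m, x i (g m)) * (c j * ∏ m, x j (g m)) := by
        simp only [dotProduct_pow, mul_sum]
        exact sum_congr rfl fun i _ => sum_congr rfl fun j _ => sum_congr rfl fun g _ => by ring
    _ = ∑ g : Fin n → κ, ∑ i, ∑ j, (c i * ∏ m, x i (g m)) * (c j * ∏ m, x j (g m)) :=
        (sum_congr rfl fun _ _ => sum_comm).trans sum_comm
    _ = ∑ g : Fin n → κ, (∑ i, c i * ∏ m, x i (g m)) ^ 2 := by simp only [sq, sum_mul_sum]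

end Monomials

theorem posDef_exp_mul_dotProduct {ι κ : Type*} [Fintype ι] [Fintype κ] {x : ι → κ → ℝ}
    (hx : Function.Injective x) {t : ℝ} (ht : 0 < t) :
    (of fun i j => Real.exp (t * (x i ⬝ᵥ x j))).PosDef := by
  refine PosDef.of_dotProduct_mulVec_pos ?_ fun c hc => ?_
  · ext i j
    simp [dotProduct_comm]
  have hquad : star c ⬝ᵥ (of (fun i j => Real.exp (t * (x i ⬝ᵥ x j))) *ᵥ c) =
      ∑ i, ∑ j, c i * c j * Real.exp (t * (x i ⬝ᵥ x j)) := by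
    simp only [dotProduct, mulVec, of_apply, mul_sum, star_trivial]
    exact sum_congr rfl fun i _ => sum_congr rfl fun j _ => by ring
  have hseries : HasSum (fun n : ℕ => t ^ n / n.factorial *
      ∑ g : Fin n → κ, (∑ i, c i * ∏ m, x i (g m)) ^ 2)
      (star c ⬝ᵥ (of (fun i j => Real.exp (t * (x i ⬝ᵥ x j))) *ᵥ c)) := by
    simp only [hquad, ← sum_sum_mul_mul_dotProduct_pow, mul_sum]
    refine hasSum_sum fun i _ => hasSum_sum fun j _ => ?_
    have hexp := (NormedSpace.expSeries_div_hasSum_exp (t * (x i ⬝ᵥ x j))).mul_left (c i * c j)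
    rw [← Real.exp_eq_exp_ℝ] at hexp
    convert hexp using 2 with n
    · rfl
    · ring
  obtain ⟨n, g, hg⟩ : ∃ (n : ℕ) (g : Fin n → κ), ∑ i, c i * ∏ m, x i (g m) ≠ 0 := by
    by_contra! h
    exact hc (eq_zero_of_forall_sum_mul_prod_eq_zero hx h)
  refine hasSum_lt (f := 0) (i := n) (fun n => by positivity) ?_ hasSum_zero hseries
  exact mul_pos (by positivity) (sum_pos' (fun _ _ => sq_nonneg _) ⟨g, mem_univ g, by positivity⟩)

theorem Real.exp_neg_norm_sub_sq_div {E : Type*} [NormedAddCommGroup E] [InnerProductSpace ℝ E]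
    (x y : E) (l : ℝ) :
    Real.exp (-‖x - y‖ ^ 2 / (2 * l ^ 2)) =
      Real.exp (-‖x‖ ^ 2 / (2 * l ^ 2)) * Real.exp ((l ^ 2)⁻¹ * inner ℝ x y) *
        Real.exp (-‖y‖ ^ 2 / (2 * l ^ 2)) := by
  rw [← Real.exp_add, ← Real.exp_add, norm_sub_sq_real]
  ring_nf

theorem Matrix.PosDef.diagonal_mul_mul_diagonal {ι R : Type*} [Fintype ι] [DecidableEq ι]
    [CommRing R] [PartialOrder R] [StarRing R] [TrivialStar R] [IsDomain R]
    {A : Matrix ι ι R} (hA : A.PosDef) {d : ι → R} (hd : ∀ i, d i ≠ 0) :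
    (diagonal d * A * diagonal d).PosDef := by
  have hinj : Function.Injective (diagonal d).mulVec := fun v w h => funext fun i =>
    mul_left_cancel₀ (hd i) (by simpa only [mulVec_diagonal] using congrFun h i)
  simpa [diagonal_conjTranspose] using hA.conjTranspose_mul_mul_same hinj

theorem stmt_17 (d M : ℕ) (l : ℝ) (hl : 0 < l)
    (x : Fin M → EuclideanSpace ℝ (Fin d)) (hx : Function.Injective x) :
    (Matrix.of fun i j : Fin M =>
        Real.exp (-‖x i - x j‖ ^ 2 / (2 * l ^ 2))).PosDef ∧
    0 < (Matrix.of fun i j : Fin M =>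
        Real.exp (-‖x i - x j‖ ^ 2 / (2 * l ^ 2))).det := by
  set D := diagonal fun i => Real.exp (-‖x i‖ ^ 2 / (2 * l ^ 2))
  have hfactor : (of fun i j => Real.exp (-‖x i - x j‖ ^ 2 / (2 * l ^ 2))) =
      D * (of fun i j => Real.exp ((l ^ 2)⁻¹ * (WithLp.ofLp (x i) ⬝ᵥ WithLp.ofLp (x j)))) * D := by
    ext i j
    simp only [D, diagonal_mul, mul_diagonal, of_apply, Real.exp_neg_norm_sub_sq_div,
      EuclideanSpace.inner_eq_star_dotProduct, star_trivial, dotProduct_comm]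
  have hE := posDef_exp_mul_dotProduct ((WithLp.ofLp_injective 2).comp hx) (t := (l ^ 2)⁻¹)
    (by positivity)
  have hK : (of fun i j => Real.exp (-‖x i - x j‖ ^ 2 / (2 * l ^ 2))).PosDef :=
    hfactor ▸ hE.diagonal_mul_mul_diagonal fun _ => Real.exp_ne_zero _
  exact ⟨hK, hK.det_pos⟩
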